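/- Let q ∈ (3/4, 1), κ ∈ W = I_q × [0,∞) with κ₂ > 0, τ(v) = ((q-1+v₁)/v₁, v₂/v₁), σ(v) = ((1-q)/(1-v₁), v₂(1-q)/(1-v₁)). For every v ∈ W \ Area(κ) with v₁ ≤ κ₁, there exists u ∈ W \ Area(κ) with u₁ = σᵏ(κ)₁ for some k ≥ 0 and v ∈ L(u), where L(u) = {λu + (1-λ)τ(u) : λ ∈ (0,1]}. -/

import Mathlib

noncomputable def tau (q : ℝ) (v : ℝ × ℝ) : ℝ × ℝ := ((q - 1 + v.1)/v.1, v.2/v.1)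

noncomputable def sig (q : ℝ) (v : ℝ × ℝ) : ℝ × ℝ :=
  ((1 - q)/(1 - v.1), v.2 * (1 - q)/(1 - v.1))

/-- The set `W = I_q × [0,∞)`. -/
noncomputable def W (q : ℝ) : Set (ℝ × ℝ) :=
  (Set.Ioo ((1 - Real.sqrt (4*q - 3))/2) ((1 + Real.sqrt (4*q - 3))/2)) ×ˢ Set.Ici (0:ℝ)

/-- The set of points `{τᵏ(κ), σᵏ(κ) : k ∈ ℕ}`. -/
noncomputable def Points (q : ℝ) (k : ℝ × ℝ) : Set (ℝ × ℝ) :=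
  {p | ∃ n : ℕ, p = (tau q)^[n] k ∨ p = (sig q)^[n] k}

/-- The closed half-plane above the line through `u` and `τ(u)`. -/
noncomputable def H (q : ℝ) (u : ℝ × ℝ) : Set (ℝ × ℝ) :=
  {w | ((tau q u).2 - u.2) * (w.1 - u.1) + (u.1 - (tau q u).1) * (w.2 - u.2) ≤ 0}

noncomputable def Area (q : ℝ) (k : ℝ × ℝ) : Set (ℝ × ℝ) :=
  W q ∩ ⋂ u ∈ Points q k, H q u

/-- The half-open segment from `u` (inclusive) to `τ(u)` (exclusive). -/
noncomputable def L (q : ℝ) (u : ℝ × ℝ) : Set (ℝ × ℝ) :=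
  {p | ∃ l ∈ Set.Ioc (0:ℝ) 1, p = l • u + (1 - l) • tau q u}


/-! `I_q` is the interval where `x (1 - x) > 1 - q`, which `τ` and `σ` preserve,
`τ` moving points to the right and `σ` to the left. On `[v₁, κ₁]` every `σ`-step moves left by a
uniform amount, so `v₁ ∈ [p₁, τ(p)₁)` for some `p = σⁿ(κ)`, and rescaling the second coordinate
gives `u` above `p` with `v ∈ L(u)`. Some constraint `H(p')`, `p' ∈ Points(κ)`, fails at `v`; since
the constraint is affine, it fails at `u` or at `τ(u)`. In the latter case it fails at `u` for
`σ(p')`, because the projective map `τ` sends the line through `σ(p')` and `p'` onto the line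
through `p'` and `τ(p')`. -/

open Function Set

lemma mem_Ioo_sqrt_iff (q x : ℝ) :
    x ∈ Ioo ((1 - √(4 * q - 3)) / 2) ((1 + √(4 * q - 3)) / 2) ↔ 1 - q < x * (1 - x) := by
  rw [mem_Ioo]
  rcases le_or_gt 0 (4 * q - 3) with h | h
  · have hs := Real.sq_sqrt h
    have hs0 := Real.sqrt_nonneg (4 * q - 3)
    constructor
    · rintro ⟨h1, h2⟩
      nlinarith
    · intro h'
      constructor <;> nlinarith
  · rw [Real.sqrt_eq_zero_of_nonpos h.le]
    constructor
    · rintro ⟨h1, h2⟩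
      linarith
    · intro h'
      nlinarith [sq_nonneg (2 * x - 1)]

lemma mem_W_iff {q : ℝ} {w : ℝ × ℝ} : w ∈ W q ↔ 1 - q < w.1 * (1 - w.1) ∧ 0 ≤ w.2 := by
  rw [W, mem_prod, mem_Ioo_sqrt_iff, mem_Ici]

lemma min_le_mul_one_sub_of_mem_Icc {x y z : ℝ} (hxy : x ≤ y) (hyz : y ≤ z) :
    min (x * (1 - x)) (z * (1 - z)) ≤ y * (1 - y) := by
  rcases le_or_gt (x + y) 1 with h | h
  · exact min_le_of_left_le (by nlinarith)
  · exact min_le_of_right_le (by nlinarith)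

section

variable {q : ℝ}

lemma pos_and_lt_one_of_lt_mul_one_sub (hq : q < 1) {x : ℝ} (hx : 1 - q < x * (1 - x)) :
    0 < x ∧ x < 1 := by
  constructor <;> nlinarith

lemma lt_tau_fst (hq : q < 1) {v : ℝ × ℝ} (hv : 1 - q < v.1 * (1 - v.1)) :
    v.1 < (tau q v).1 := by
  rw [tau, lt_div_iff₀ (pos_and_lt_one_of_lt_mul_one_sub hq hv).1]
  linarith

lemma sig_fst_lt (hq : q < 1) {v : ℝ × ℝ} (hv : 1 - q < v.1 * (1 - v.1)) :
    (sig q v).1 < v.1 := by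
  have := (pos_and_lt_one_of_lt_mul_one_sub hq hv).2
  rw [sig, div_lt_iff₀ (by linarith)]
  linarith

lemma mul_one_sub_sub_le_sub_sig_fst (hq : q < 1) {v : ℝ × ℝ} (hv : 1 - q < v.1 * (1 - v.1)) :
    v.1 * (1 - v.1) - (1 - q) ≤ v.1 - (sig q v).1 := by
  obtain ⟨hv0, hv1⟩ := pos_and_lt_one_of_lt_mul_one_sub hq hv
  have hv1' : 1 - v.1 ≠ 0 := by linarith
  have hsig : v.1 - (sig q v).1 = (v.1 * (1 - v.1) - (1 - q)) / (1 - v.1) := by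
    rw [sig]
    field_simp
  rw [hsig, le_div_iff₀ (by linarith)]
  nlinarith

lemma mapsTo_tau (hq : q < 1) : MapsTo (tau q) (W q) (W q) := by
  intro v hv
  rw [mem_W_iff] at hv ⊢
  obtain ⟨hv0, hv1⟩ := pos_and_lt_one_of_lt_mul_one_sub hq hv.1
  have hfst : (tau q v).1 * (1 - (tau q v).1) - (1 - q) =
      (1 - q) * (v.1 * (1 - v.1) - (1 - q)) / v.1 ^ 2 := by
    simp only [tau]
    field_simp
    ring
  refine ⟨?_, div_nonneg hv.2 hv0.le⟩
  have : 0 < (1 - q) * (v.1 * (1 - v.1) - (1 - q)) / v.1 ^ 2 := by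
    apply div_pos _ (by positivity)
    nlinarith
  linarith

lemma mapsTo_sig (hq : q < 1) : MapsTo (sig q) (W q) (W q) := by
  intro v hv
  rw [mem_W_iff] at hv ⊢
  obtain ⟨hv0, hv1⟩ := pos_and_lt_one_of_lt_mul_one_sub hq hv.1
  have hfst : (sig q v).1 * (1 - (sig q v).1) - (1 - q) =
      (1 - q) * (v.1 * (1 - v.1) - (1 - q)) / (1 - v.1) ^ 2 := by
    have hv1' : 1 - v.1 ≠ 0 := by linarith
    simp only [sig]
    field_simp
    ring
  refine ⟨?_, div_nonneg (mul_nonneg hv.2 (by linarith)) (by linarith)⟩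
  have : 0 < (1 - q) * (v.1 * (1 - v.1) - (1 - q)) / (1 - v.1) ^ 2 := by
    apply div_pos _ (by nlinarith)
    nlinarith
  linarith

lemma sig_tau (hq : q ≠ 1) {v : ℝ × ℝ} (hv : v.1 ≠ 0) : sig q (tau q v) = v := by
  have hq' : 1 - q ≠ 0 := sub_ne_zero.2 hq.symm
  have hden : 1 - (tau q v).1 = (1 - q) / v.1 := by
    simp only [tau]
    field_simp
    ring
  ext
  · rw [sig, hden]
    field_simp
  · rw [sig, hden]
    simp only [tau]
    field_simp

lemma tau_sig (hq : q ≠ 1) {v : ℝ × ℝ} (hv : v.1 ≠ 1) : tau q (sig q v) = v := by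
  have hq' : 1 - q ≠ 0 := sub_ne_zero.2 hq.symm
  have hv' : 1 - v.1 ≠ 0 := sub_ne_zero.2 hv.symm
  ext
  · simp only [sig, tau]
    field_simp
    ring
  · simp only [sig, tau]
    field_simp

lemma Points_subset_W (hq : q < 1) {k : ℝ × ℝ} (hk : k ∈ W q) : Points q k ⊆ W q := by
  rintro p ⟨n, rfl | rfl⟩
  · exact (mapsTo_tau hq).iterate n hk
  · exact (mapsTo_sig hq).iterate n hk

lemma sig_mem_Points (hq : q < 1) {k p : ℝ × ℝ} (hk : k ∈ W q) (hp : p ∈ Points q k) :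
    sig q p ∈ Points q k := by
  obtain ⟨n, rfl | rfl⟩ := hp
  · rcases n with _ | n
    · exact ⟨1, Or.inr rfl⟩
    · have hn := (mem_W_iff.1 ((mapsTo_tau hq).iterate n hk)).1
      refine ⟨n, Or.inl ?_⟩
      rw [iterate_succ_apply', sig_tau hq.ne (pos_and_lt_one_of_lt_mul_one_sub hq hn).1.ne']
  · exact ⟨n + 1, Or.inr (iterate_succ_apply' _ _ _).symm⟩

lemma exists_sig_iterate_fst_le (hq : q < 1) {k : ℝ × ℝ} (hk : k ∈ W q) {x : ℝ}
    (hx : 1 - q < x * (1 - x)) : ∃ n, ((sig q)^[n] k).1 ≤ x := by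
  set δ := min (x * (1 - x)) (k.1 * (1 - k.1)) - (1 - q)
  have hδ : 0 < δ := sub_pos.2 (lt_min hx (mem_W_iff.1 hk).1)
  by_contra! hlt
  -- as long as the orbit stays in `[x, k.1]`, each σ-step moves it left by at least `δ`
  have hdecr : ∀ n : ℕ, ((sig q)^[n] k).1 ≤ k.1 - n * δ := by
    intro n
    induction n with
    | zero => simp
    | succ n ih =>
      have hn := (mem_W_iff.1 ((mapsTo_sig hq).iterate n hk)).1
      have hstep := mul_one_sub_sub_le_sub_sig_fst hq hn
      have hmin := min_le_mul_one_sub_of_mem_Icc (hlt n).le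
        (ih.trans (sub_le_self _ (by positivity)))
      rw [iterate_succ_apply']
      push_cast
      linarith
  obtain ⟨n, hn⟩ := exists_nat_gt ((k.1 - x) / δ)
  rw [div_lt_iff₀ hδ] at hn
  linarith [hdecr n, hlt n]

lemma exists_sig_iterate_fst_le_lt_tau_fst (hq : q < 1) {k : ℝ × ℝ} (hk : k ∈ W q) {x : ℝ}
    (hx : 1 - q < x * (1 - x)) (hxk : x ≤ k.1) :
    ∃ n, ((sig q)^[n] k).1 ≤ x ∧ x < (tau q ((sig q)^[n] k)).1 := by
  have hex := exists_sig_iterate_fst_le hq hk hx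
  refine ⟨Nat.find hex, Nat.find_spec hex, ?_⟩
  rcases h : Nat.find hex with _ | n
  · exact hxk.trans_lt (lt_tau_fst hq (mem_W_iff.1 hk).1)
  · -- τ undoes the last σ-step, and `x < (σⁿ k).1` by minimality
    have hn := Nat.find_min hex (by omega : n < Nat.find hex)
    have hW := (mem_W_iff.1 ((mapsTo_sig hq).iterate n hk)).1
    rw [iterate_succ_apply', tau_sig hq.ne (pos_and_lt_one_of_lt_mul_one_sub hq hW).2.ne]
    exact not_le.1 hn

noncomputable def lineSide (q : ℝ) (u w : ℝ × ℝ) : ℝ :=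
  ((tau q u).2 - u.2) * (w.1 - u.1) + (u.1 - (tau q u).1) * (w.2 - u.2)

lemma lineSide_segment (p u w : ℝ × ℝ) (l : ℝ) :
    lineSide q p (l • u + (1 - l) • w) = l * lineSide q p u + (1 - l) * lineSide q p w := by
  simp only [lineSide, Prod.fst_add, Prod.snd_add, Prod.smul_fst, Prod.smul_snd, smul_eq_mul]
  ring

lemma sig_fst_sub_mul_lineSide_tau (hq : q ≠ 1) {p w : ℝ × ℝ} (hp0 : p.1 ≠ 0)
    (hp1 : p.1 ≠ 1) (hw : w.1 ≠ 0) :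
    ((sig q p).1 - p.1) * (w.1 * lineSide q p (tau q w)) =
      (p.1 - (tau q p).1) * lineSide q (sig q p) w := by
  have hq' : 1 - q ≠ 0 := sub_ne_zero.2 hq.symm
  have hp1' : 1 - p.1 ≠ 0 := sub_ne_zero.2 hp1.symm
  simp only [lineSide, sig, tau]
  field_simp
  ring

lemma lineSide_sig_pos (hq : q < 1) {p w : ℝ × ℝ} (hp : 1 - q < p.1 * (1 - p.1))
    (hw : 0 < w.1) (h : 0 < lineSide q p (tau q w)) : 0 < lineSide q (sig q p) w := by
  obtain ⟨hp0, hp1⟩ := pos_and_lt_one_of_lt_mul_one_sub hq hp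
  have hid := sig_fst_sub_mul_lineSide_tau hq.ne hp0.ne' hp1.ne hw.ne'
  have hσ := sig_fst_lt hq hp
  have hτ := lt_tau_fst hq hp
  nlinarith [mul_pos hw h]

lemma exists_lineSide_pos_of_notMem_Area {k w : ℝ × ℝ} (hw : w ∈ W q)
    (hA : w ∉ Area q k) : ∃ p ∈ Points q k, 0 < lineSide q p w := by
  by_contra! h
  exact hA ⟨hw, mem_iInter₂.2 h⟩

lemma notMem_Area_of_lineSide_pos {k p w : ℝ × ℝ} (hp : p ∈ Points q k)
    (h : 0 < lineSide q p w) : w ∉ Area q k :=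
  fun hw ↦ (show lineSide q p w ≤ 0 from mem_iInter₂.1 hw.2 p hp).not_gt h

lemma notMem_Area_of_mem_L (hq : q < 1) {k u v : ℝ × ℝ} (hk : k ∈ W q)
    (hu : u ∈ W q) (hv : v ∈ W q \ Area q k) (hvu : v ∈ L q u) : u ∉ Area q k := by
  obtain ⟨p, hp, hpv⟩ := exists_lineSide_pos_of_notMem_Area hv.1 hv.2
  obtain ⟨l, ⟨hl0, hl1⟩, rfl⟩ := hvu
  rw [lineSide_segment] at hpv
  by_cases hpu : 0 < lineSide q p u
  · exact notMem_Area_of_lineSide_pos hp hpu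
  · have hpτu : 0 < lineSide q p (tau q u) := by nlinarith
    have hpW := (mem_W_iff.1 (Points_subset_W hq hk hp)).1
    have hu0 := (pos_and_lt_one_of_lt_mul_one_sub hq (mem_W_iff.1 hu).1).1
    exact notMem_Area_of_lineSide_pos (sig_mem_Points hq hk hp) (lineSide_sig_pos hq hpW hu0 hpτu)

lemma exists_mem_L {x : ℝ} {v : ℝ × ℝ} (hx : 0 < x) (hxv : x ≤ v.1)
    (hvT : v.1 < (q - 1 + x) / x) (hv : 0 ≤ v.2) : ∃ y, 0 ≤ y ∧ v ∈ L q (x, y) := by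
  set T := (q - 1 + x) / x
  have hxT : 0 < T - x := by linarith
  set l := (T - v.1) / (T - x)
  have hlT : l * (T - x) = T - v.1 := div_mul_cancel₀ _ hxT.ne'
  have hl0 : 0 < l := div_pos (by linarith) hxT
  have hl1 : l ≤ 1 := (div_le_one hxT).2 (by linarith)
  have hd : 0 < l + (1 - l) / x := add_pos_of_pos_of_nonneg hl0 (div_nonneg (by linarith) hx.le)
  set y := v.2 / (l + (1 - l) / x)
  refine ⟨y, div_nonneg hv hd.le, l, ⟨hl0, hl1⟩, ?_⟩
  ext
  · show v.1 = l * x + (1 - l) * T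
    linear_combination hlT
  · show v.2 = l * y + (1 - l) * (y / x)
    rw [show l * y + (1 - l) * (y / x) = y * (l + (1 - l) / x) by ring,
      div_mul_cancel₀ _ hd.ne']

end

theorem out_of_area_on_segment_general (q : ℝ) (hq2 : q < 1)
    (k : ℝ × ℝ) (hk : k ∈ W q)
    (v : ℝ × ℝ) (hv : v ∈ W q \ Area q k) (hv1 : v.1 ≤ k.1) :
    ∃ u ∈ W q \ Area q k, (∃ n : ℕ, u.1 = ((sig q)^[n] k).1) ∧ v ∈ L q u := by
  obtain ⟨hvx, hvy⟩ := mem_W_iff.1 hv.1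
  obtain ⟨n, hpv, hvτ⟩ := exists_sig_iterate_fst_le_lt_tau_fst hq2 hk hvx hv1
  set p := (sig q)^[n] k
  have hp := (mem_W_iff.1 ((mapsTo_sig hq2).iterate n hk)).1
  obtain ⟨y, hy, hvu⟩ :=
    exists_mem_L (pos_and_lt_one_of_lt_mul_one_sub hq2 hp).1 hpv hvτ hvy
  have hu : (p.1, y) ∈ W q := mem_W_iff.2 ⟨hp, hy⟩
  exact ⟨(p.1, y), ⟨hu, notMem_Area_of_mem_L hq2 hk hu hv hvu⟩, ⟨n, rfl⟩, hvu⟩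

theorem out_of_area_on_segment (q : ℝ) (hq1 : 3/4 < q) (hq2 : q < 1)
    (k : ℝ × ℝ) (hk : k ∈ W q) (hk2 : 0 < k.2)
    (v : ℝ × ℝ) (hv : v ∈ W q \ Area q k) (hv1 : v.1 ≤ k.1) :
    ∃ u ∈ W q \ Area q k, (∃ n : ℕ, u.1 = ((sig q)^[n] k).1) ∧ v ∈ L q u :=
  out_of_area_on_segment_general q hq2 k hk v hv hv1
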